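/- arXiv:2104.04594 — 2 statements merged into one kernel-verified Lean document; each statement's English description precedes it below -/
import Mathlib

section
/- Suppose the Calderón block operator A associated with K, V, D, T satisfies the projection property A ∘ A = (1/4)·id_{E×F}, that (1/2)·id_E + K is a bijective linear map, and that D : E → F is a bijective linear map. Then (1/2)·id_F + T is bijective and the two expressions for the Neumann-to-Dirichlet map agree: ((1/2)·id_E + K)⁻¹ ∘ V = D⁻¹ ∘ ((1/2)·id_F − T). -/
/-- Agreement of the two expressions for the Neumann-to-Dirichlet map:
`(½·id + K)⁻¹ ∘ V = D⁻¹ ∘ (½·id − T)`, assuming the projection property of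
the Calderón block operator and bijectivity of `½·id + K` and `D`;
moreover `½·id + T` is then bijective. -/
theorem ntd_two_expressions
    {E F : Type*} [AddCommGroup E] [Module ℂ E] [AddCommGroup F] [Module ℂ F]
    (K : E →ₗ[ℂ] E) (V : F →ₗ[ℂ] E) (D : E →ₗ[ℂ] F) (T : F →ₗ[ℂ] F)
    (A : (E × F) →ₗ[ℂ] (E × F))
    (hA : ∀ (φ : E) (ψ : F), A (φ, ψ) = (-(K φ) + V ψ, D φ + T ψ))
    (hproj : A ∘ₗ A = (1/4 : ℂ) • (LinearMap.id : (E × F) →ₗ[ℂ] (E × F)))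
    (hK : Function.Bijective ((1/2 : ℂ) • (LinearMap.id : E →ₗ[ℂ] E) + K))
    (hD : Function.Bijective D) :
    Function.Bijective ((1/2 : ℂ) • (LinearMap.id : F →ₗ[ℂ] F) + T) ∧
    (LinearEquiv.ofBijective ((1/2 : ℂ) • (LinearMap.id : E →ₗ[ℂ] E) + K)
        hK).symm.toLinearMap ∘ₗ V =
      (LinearEquiv.ofBijective D hD).symm.toLinearMap ∘ₗ
        ((1/2 : ℂ) • (LinearMap.id : F →ₗ[ℂ] F) - T) := by
  set P : E →ₗ[ℂ] E := (1/2 : ℂ) • (LinearMap.id : E →ₗ[ℂ] E) + K with hP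
  set Q : F →ₗ[ℂ] F := (1/2 : ℂ) • (LinearMap.id : F →ₗ[ℂ] F) + T with hQ
  have hpt : ∀ p : E × F, A (A p) = (1/4 : ℂ) • p := by
    intro p
    have := LinearMap.ext_iff.mp hproj p
    simpa using this
  -- identities from (φ, 0)
  have h12 : ∀ φ : E, K (K φ) + V (D φ) = (1/4 : ℂ) • φ ∧ D (K φ) = T (D φ) := by
    intro φ
    have h := hpt (φ, 0)
    rw [hA, hA] at h
    simp only [Prod.smul_mk, smul_zero, Prod.mk.injEq, map_zero, add_zero, map_add,
      map_neg, neg_neg] at h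
    exact ⟨h.1, neg_add_eq_zero.mp h.2⟩
  -- identities from (0, ψ)
  have h34 : ∀ ψ : F, K (V ψ) = V (T ψ) ∧ D (V ψ) + T (T ψ) = (1/4 : ℂ) • ψ := by
    intro ψ
    have h := hpt ((0 : E), ψ)
    rw [hA, hA] at h
    simp only [Prod.smul_mk, smul_zero, Prod.mk.injEq, map_zero, zero_add, neg_zero,
      map_add, map_neg, neg_neg] at h
    exact ⟨neg_add_eq_zero.mp h.1, h.2⟩
  have hDK : ∀ φ : E, D (K φ) = T (D φ) := fun φ => (h12 φ).2
  have hDV : ∀ ψ : F, D (V ψ) + T (T ψ) = (1/4 : ℂ) • ψ := fun ψ => (h34 ψ).2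
  -- intertwining: D ∘ P = Q ∘ D
  have hDP : ∀ φ : E, D (P φ) = Q (D φ) := by
    intro φ
    simp only [hP, hQ, LinearMap.add_apply, LinearMap.smul_apply, LinearMap.id_apply,
      map_add, map_smul, hDK]
  set eD := LinearEquiv.ofBijective D hD with heD
  have hQbij : Function.Bijective Q := by
    have hfun : ⇑Q = ⇑D ∘ ⇑P ∘ ⇑eD.symm := by
      funext ψ
      simp only [Function.comp_apply]
      rw [hDP]
      have h' : D (eD.symm ψ) = ψ := eD.apply_symm_apply ψ
      rw [h']
    rw [hfun]
    exact hD.comp (hK.comp eD.symm.bijective)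
  refine ⟨hQbij, ?_⟩
  set eP := LinearEquiv.ofBijective P hK with heP
  apply LinearMap.ext
  intro ψ
  simp only [LinearMap.coe_comp, Function.comp_apply, LinearEquiv.coe_coe]
  apply eD.injective
  rw [eD.apply_symm_apply]
  -- goal: eD (eP.symm (V ψ)) = (½ - T) ψ ; note eD x = D x
  have hx : P (eP.symm (V ψ)) = V ψ := eP.apply_symm_apply (V ψ)
  have h1 : D (P (eP.symm (V ψ))) = D (V ψ) := congrArg D hx
  rw [hDP] at h1
  have h2 : Q (((1/2 : ℂ) • (LinearMap.id : F →ₗ[ℂ] F) - T) ψ) = D (V ψ) := by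
    have := hDV ψ
    simp only [hQ, LinearMap.add_apply, LinearMap.sub_apply, LinearMap.smul_apply,
      LinearMap.id_apply, map_sub, map_smul, smul_sub, smul_smul]
    have : T (T ψ) = (1/4 : ℂ) • ψ - D (V ψ) := by
      linear_combination (norm := abel) hDV ψ
    rw [this]
    module
  have h3 : Q (D (eP.symm (V ψ))) = Q (((1/2 : ℂ) • (LinearMap.id : F →ₗ[ℂ] F) - T) ψ) := by
    rw [h1, h2]
  have := hQbij.injective h3
  simpa [heD] using this
end

section
/- Suppose the Calderón block operator A associated with K, V, D, T satisfies the projection property A ∘ A = (1/4)·id_{E×F}, that (1/2)·id_F − T is a bijective linear map, and that V : F → E is a bijective linear map. Then (1/2)·id_E − K is bijective and the two expressions for the Dirichlet-to-Neumann map agree: ((1/2)·id_F − T)⁻¹ ∘ D = V⁻¹ ∘ ((1/2)·id_E + K). -/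
/-- Agreement of the two expressions for the Dirichlet-to-Neumann map:
`(½·id − T)⁻¹ ∘ D = V⁻¹ ∘ (½·id + K)`, assuming the projection property of
the Calderón block operator and bijectivity of `½·id − T` and `V`;
moreover `½·id − K` is then bijective. -/
theorem dtn_two_expressions
    {E F : Type*} [AddCommGroup E] [Module ℂ E] [AddCommGroup F] [Module ℂ F]
    (K : E →ₗ[ℂ] E) (V : F →ₗ[ℂ] E) (D : E →ₗ[ℂ] F) (T : F →ₗ[ℂ] F)
    (A : (E × F) →ₗ[ℂ] (E × F))
    (hA : ∀ (φ : E) (ψ : F), A (φ, ψ) = (-(K φ) + V ψ, D φ + T ψ))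
    (hproj : A ∘ₗ A = (1/4 : ℂ) • (LinearMap.id : (E × F) →ₗ[ℂ] (E × F)))
    (hT : Function.Bijective ((1/2 : ℂ) • (LinearMap.id : F →ₗ[ℂ] F) - T))
    (hV : Function.Bijective V) :
    Function.Bijective ((1/2 : ℂ) • (LinearMap.id : E →ₗ[ℂ] E) - K) ∧
    (LinearEquiv.ofBijective ((1/2 : ℂ) • (LinearMap.id : F →ₗ[ℂ] F) - T)
        hT).symm.toLinearMap ∘ₗ D =
      (LinearEquiv.ofBijective V hV).symm.toLinearMap ∘ₗ
        ((1/2 : ℂ) • (LinearMap.id : E →ₗ[ℂ] E) + K) := by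
  set S : F →ₗ[ℂ] F := (1/2 : ℂ) • (LinearMap.id : F →ₗ[ℂ] F) - T with hSdef
  set M : E →ₗ[ℂ] E := (1/2 : ℂ) • (LinearMap.id : E →ₗ[ℂ] E) - K with hMdef
  have hp : ∀ p : E × F, A (A p) = (1/4 : ℂ) • p := fun p =>
    LinearMap.ext_iff.mp hproj p
  -- key identities
  have h1 : ∀ φ : E, K (K φ) + V (D φ) = (1/4 : ℂ) • φ := by
    intro φ
    have h := hp (φ, 0)
    rw [hA φ 0] at h
    simp only [map_zero, add_zero] at h
    rw [hA] at h
    have h' := congrArg Prod.fst h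
    simp only [Prod.smul_mk, smul_zero, map_neg, neg_neg] at h'
    simpa using h'
  have h3 : ∀ ψ : F, V (T ψ) = K (V ψ) := by
    intro ψ
    have h := hp (0, ψ)
    rw [hA 0 ψ] at h
    simp only [map_zero, neg_zero, zero_add] at h
    rw [hA] at h
    have h' := congrArg Prod.fst h
    simp only [Prod.smul_mk, smul_zero] at h'
    exact (neg_add_eq_zero.mp h').symm
  set eV := LinearEquiv.ofBijective V hV with heV
  have heVapp : ∀ ψ : F, eV ψ = V ψ := fun ψ => rfl
  have hMV : ∀ ψ : F, M (V ψ) = V (S ψ) := by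
    intro ψ
    simp only [hMdef, hSdef, LinearMap.sub_apply, LinearMap.smul_apply,
      LinearMap.id_apply, map_sub, map_smul, h3 ψ]
  have hMbij : Function.Bijective M := by
    have hfun : (⇑M : E → E) = ⇑V ∘ ⇑S ∘ ⇑eV.symm := by
      funext x
      have h := hMV (eV.symm x)
      have hx : V (eV.symm x) = x := eV.apply_symm_apply x
      simp only [Function.comp_apply, ← h, hx]
    rw [hfun]
    exact hV.comp (hT.comp eV.symm.bijective)
  refine ⟨hMbij, ?_⟩
  set eT := LinearEquiv.ofBijective S hT with heT
  ext φ
  simp only [LinearMap.coe_comp, Function.comp_apply, LinearEquiv.coe_coe,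
    LinearMap.add_apply, LinearMap.smul_apply, LinearMap.id_apply]
  rw [LinearEquiv.symm_apply_eq]
  -- goal : D φ = eT (eV.symm ((1/2)•φ + K φ))
  apply hV.injective
  have hTapp : ∀ ψ : F, eT ψ = S ψ := fun ψ => rfl
  rw [hTapp, ← hMV]
  have hx : V (eV.symm ((1/2 : ℂ) • φ + K φ)) = (1/2 : ℂ) • φ + K φ :=
    eV.apply_symm_apply _
  rw [hx]
  -- goal : V (D φ) = M ((1/2)•φ + K φ)
  have expand : M ((1/2 : ℂ) • φ + K φ) = (1/4 : ℂ) • φ - K (K φ) := by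
    simp only [hMdef, LinearMap.sub_apply, LinearMap.smul_apply, LinearMap.id_apply,
      map_add, map_smul]
    module
  rw [expand, eq_sub_iff_add_eq, add_comm]
  exact h1 φ
end
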